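/- arXiv:2302.02761 — 8 statements merged into one kernel-verified Lean document; each statement's English description precedes it below -/
import Mathlib

section
/- For a word w in the free group F_n, w is achiral (i.e., for every group G, the image of the word map of w equals the image of the word map of w⁻¹) if and only if there exists an endomorphism ψ of F_n such that ψ(w) = w⁻¹. -/
/-- The image of the word map of `w` on a group `G`. -/
def wordImage {n : ℕ} (w : FreeGroup (Fin n)) (G : Type*) [Group G] : Set G :=
  Set.range fun f : Fin n → G => FreeGroup.lift f w

theorem achiral_iff_exists_endomorphism {n : ℕ} (w : FreeGroup (Fin n)) :
    (∀ (G : Type u) [Group G], wordImage w G = wordImage w⁻¹ G) ↔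
      ∃ ψ : FreeGroup (Fin n) →* FreeGroup (Fin n), ψ w = w⁻¹ := by
  constructor
  · intro h
    -- use G = ULift (FreeGroup (Fin n))
    have h' := h (ULift (FreeGroup (Fin n)))
    set e : FreeGroup (Fin n) →* ULift (FreeGroup (Fin n)) :=
      MulEquiv.ulift.symm.toMonoidHom
    have hmem : e w⁻¹ ∈ wordImage w⁻¹ (ULift (FreeGroup (Fin n))) := by
      refine ⟨fun i => e (FreeGroup.of i), ?_⟩
      have : (FreeGroup.lift fun i => e (FreeGroup.of i)) = e :=
        FreeGroup.ext_hom _ _ (fun i => by simp)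
      show (FreeGroup.lift fun i => e (FreeGroup.of i)) w⁻¹ = e w⁻¹
      rw [this]
    rw [← h'] at hmem
    obtain ⟨f, hf⟩ := hmem
    refine ⟨(MulEquiv.ulift.toMonoidHom).comp (FreeGroup.lift f), ?_⟩
    simp only [MonoidHom.comp_apply, hf]
    rfl
  · rintro ⟨ψ, hψ⟩ G _
    have key : ∀ g : G, g ∈ wordImage w G → g⁻¹ ∈ wordImage w G := by
      rintro g ⟨f, hf⟩
      refine ⟨fun i => FreeGroup.lift f (ψ (FreeGroup.of i)), ?_⟩
      have : (FreeGroup.lift fun i => FreeGroup.lift f (ψ (FreeGroup.of i)))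
          = (FreeGroup.lift f).comp ψ :=
        FreeGroup.ext_hom _ _ (fun i => by simp)
      show (FreeGroup.lift fun i => FreeGroup.lift f (ψ (FreeGroup.of i))) w = g⁻¹
      rw [this]
      simp only [MonoidHom.comp_apply, hψ, map_inv]
      exact congrArg Inv.inv hf
    have inv_mem : ∀ g : G, g ∈ wordImage w⁻¹ G ↔ g⁻¹ ∈ wordImage w G := by
      intro g
      constructor
      · rintro ⟨f, hf⟩
        exact ⟨f, by simp only [map_inv] at hf; rw [← hf, inv_inv]⟩
      · rintro ⟨f, hf⟩
        exact ⟨f, by show (FreeGroup.lift f) w⁻¹ = g; simp only [map_inv, hf, inv_inv]⟩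
    ext g
    rw [inv_mem g]
    constructor
    · exact key g
    · intro hg
      have := key g⁻¹ hg
      rwa [inv_inv] at this
end

section
/- If w ∈ F_n and w^k is achiral for some nonzero integer k, then w is achiral. -/
def Achiral {n : ℕ} (w : FreeGroup (Fin n)) : Prop :=
  ∃ ψ : FreeGroup (Fin n) →* FreeGroup (Fin n), ψ w = w⁻¹

theorem achiral_of_achiral_zpow {n : ℕ} (w : FreeGroup (Fin n)) (k : ℤ) (hk : k ≠ 0)
    (hw : Achiral (w ^ k)) : Achiral w := by
  obtain ⟨ψ, hψ⟩ := hw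
  refine ⟨ψ, ?_⟩
  -- `k`-th roots are unique by Mathlib's `IsMulTorsionFree (FreeGroup α)` instance.
  rw [← zpow_left_inj hk, ← map_zpow, hψ, inv_zpow]
end

section
/- Let m ≤ n and regard F_m as a subgroup of F_n via the inclusion of generators. A word w ∈ F_m is achiral in F_m if and only if it is achiral in F_n. -/
/-- The inclusion `F_m ↪ F_n` (for `m ≤ n`) sending the generators of `F_m`
to the first `m` generators of `F_n`. -/
def freeIncl {m n : ℕ} (h : m ≤ n) : FreeGroup (Fin m) →* FreeGroup (Fin n) :=
  FreeGroup.lift fun i => FreeGroup.of (Fin.castLE h i)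

/-- The retraction `F_n ↠ F_m` killing the last `n - m` generators. -/
def freeRetr {m n : ℕ} : FreeGroup (Fin n) →* FreeGroup (Fin m) :=
  FreeGroup.lift fun j => if h' : (j : ℕ) < m then FreeGroup.of ⟨j, h'⟩ else 1

theorem freeRetr_incl {m n : ℕ} (h : m ≤ n) (w : FreeGroup (Fin m)) :
    freeRetr (freeIncl h w) = w := by
  have : (freeRetr.comp (freeIncl h) : FreeGroup (Fin m) →* FreeGroup (Fin m))
      = MonoidHom.id _ := by
    apply FreeGroup.ext_hom
    intro i
    simp [freeIncl, freeRetr, Fin.castLE, i.isLt]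
  calc freeRetr (freeIncl h w) = (freeRetr.comp (freeIncl h)) w := rfl
    _ = w := by rw [this]; rfl

theorem achiral_incl_iff {m n : ℕ} (h : m ≤ n) (w : FreeGroup (Fin m)) :
    (∃ φ : FreeGroup (Fin m) →* FreeGroup (Fin m), φ w = w⁻¹) ↔
      ∃ ψ : FreeGroup (Fin n) →* FreeGroup (Fin n),
        ψ (freeIncl h w) = (freeIncl h w)⁻¹ := by
  constructor
  · rintro ⟨φ, hφ⟩
    refine ⟨(freeIncl h).comp (φ.comp freeRetr), ?_⟩
    simp [freeRetr_incl h w, hφ]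
  · rintro ⟨ψ, hψ⟩
    refine ⟨(freeRetr).comp (ψ.comp (freeIncl h)), ?_⟩
    show freeRetr (ψ (freeIncl h w)) = w⁻¹
    rw [hψ, map_inv, freeRetr_incl]
end

section
/- For any integers m, n, ε the word x₁^m x₂^ε x₁^n x₂^ε in F_2 is inverted by the automorphism sending x₁ ↦ x₁^{−1} and x₂ ↦ x₁^m x₂^{−1} x₁^{−m}; in particular it is achiral. -/
noncomputable def invMap (m : ℤ) : FreeGroup (Fin 2) →* FreeGroup (Fin 2) :=
  FreeGroup.lift (fun i => if i = 0 then (FreeGroup.of 0)⁻¹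
    else FreeGroup.of 0 ^ m * (FreeGroup.of 1)⁻¹ * FreeGroup.of 0 ^ (-m))

lemma invMap0 (m : ℤ) : invMap m (FreeGroup.of 0) = (FreeGroup.of 0)⁻¹ := by
  simp [invMap]

lemma invMap1 (m : ℤ) : invMap m (FreeGroup.of 1) =
    FreeGroup.of 0 ^ m * (FreeGroup.of 1)⁻¹ * FreeGroup.of 0 ^ (-m) := by
  simp [invMap]

lemma invMap_invol (m : ℤ) : (invMap m).comp (invMap m) = MonoidHom.id _ := by
  apply FreeGroup.ext_hom
  intro i
  fin_cases i <;>
  · simp only [Fin.isValue, Fin.zero_eta, Fin.mk_one, MonoidHom.comp_apply,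
      MonoidHom.id_apply, invMap0, invMap1, map_mul, map_inv, map_zpow]
    group

lemma conj_zpow' {G : Type*} [Group G] (g h : G) (ε : ℤ) :
    (g * h * g⁻¹) ^ ε = g * h ^ ε * g⁻¹ := by
  rw [← MulAut.conj_apply, ← map_zpow, MulAut.conj_apply]

theorem word_x1m_x2e_x1n_x2e_inverted (m n ε : ℤ) :
    ∃ σ : FreeGroup (Fin 2) ≃* FreeGroup (Fin 2),
      σ (FreeGroup.of 0) = (FreeGroup.of 0)⁻¹ ∧
      σ (FreeGroup.of 1) =
        FreeGroup.of 0 ^ m * (FreeGroup.of 1)⁻¹ * FreeGroup.of 0 ^ (-m) ∧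
      σ (FreeGroup.of 0 ^ m * FreeGroup.of 1 ^ ε *
            FreeGroup.of 0 ^ n * FreeGroup.of 1 ^ ε) =
        (FreeGroup.of 0 ^ m * FreeGroup.of 1 ^ ε *
            FreeGroup.of 0 ^ n * FreeGroup.of 1 ^ ε)⁻¹ ∧
      ∃ ψ : FreeGroup (Fin 2) →* FreeGroup (Fin 2),
        ψ (FreeGroup.of 0 ^ m * FreeGroup.of 1 ^ ε *
              FreeGroup.of 0 ^ n * FreeGroup.of 1 ^ ε) =
          (FreeGroup.of 0 ^ m * FreeGroup.of 1 ^ ε *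
              FreeGroup.of 0 ^ n * FreeGroup.of 1 ^ ε)⁻¹ := by
  refine ⟨MonoidHom.toMulEquiv (invMap m) (invMap m) (invMap_invol m) (invMap_invol m),
    ?_, ?_, ?_, ⟨invMap m, ?_⟩⟩
  · exact invMap0 m
  · exact invMap1 m
  all_goals
  · simp only [MonoidHom.toMulEquiv_apply, map_mul, map_zpow, invMap0, invMap1]
    rw [show (FreeGroup.of 0 : FreeGroup (Fin 2)) ^ (-m) = (FreeGroup.of 0 ^ m)⁻¹ by group,
      conj_zpow']
    group
end

section
/- For any integers m, n, ε the word x₁^m x₂^ε x₁^n x₂^{−ε} in F_2 is inverted by the automorphism sending x₁ ↦ x₁^{−1} and x₂ ↦ x₁^m x₂ x₁^{−m}; in particular it is achiral. -/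
/-!
Write `a = x₁`, `b = x₂`. Since `σ` conjugates `b` by `a ^ m`, it sends `b ^ k` to
`a ^ m * b ^ k * a ^ (-m)`, so
`σ (a ^ m * b ^ ε * a ^ n * b ^ (-ε)) = a ^ (-m) * (a ^ m * b ^ ε * a ^ (-m)) * a ^ (-n) * (a ^ m * b ^ (-ε) * a ^ (-m))`,
which collapses to `b ^ ε * a ^ (-n) * b ^ (-ε) * a ^ (-m)`, the inverse of the word.
The same endomorphism squares to the identity on both generators, hence is an automorphism.
-/

open FreeGroup (of)

theorem map_zpow_mul_zpow_mul_zpow_mul_zpow_neg_eq_inv {G : Type*} [Group G] (f : G →* G)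
    {a b : G} (m n ε : ℤ)
    (hfa : f a = a⁻¹) (hfb : f b = a ^ m * b * a ^ (-m)) :
    f (a ^ m * b ^ ε * a ^ n * b ^ (-ε)) = (a ^ m * b ^ ε * a ^ n * b ^ (-ε))⁻¹ := by
  have hconj : ∀ k : ℤ, (a ^ m * b * a ^ (-m)) ^ k = a ^ m * b ^ k * a ^ (-m) := fun k => by
    rw [zpow_neg, conj_zpow]
  simp only [map_mul, map_zpow, hfa, hfb, hconj]
  group

def invConjHom (m : ℤ) : FreeGroup (Fin 2) →* FreeGroup (Fin 2) :=
  FreeGroup.lift ![(of 0)⁻¹, of 0 ^ m * of 1 * of 0 ^ (-m)]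

theorem invConjHom_of_zero (m : ℤ) : invConjHom m (of 0) = (of 0)⁻¹ := by
  simp [invConjHom]

theorem invConjHom_of_one (m : ℤ) :
    invConjHom m (of 1) = of 0 ^ m * of 1 * of 0 ^ (-m) := by
  simp [invConjHom]

theorem invConjHom_comp_self (m : ℤ) :
    (invConjHom m).comp (invConjHom m) = MonoidHom.id _ := by
  refine FreeGroup.ext_hom _ _ fun i => ?_
  fin_cases i
  · simp [invConjHom_of_zero]
  · simp [invConjHom_of_zero, invConjHom_of_one]
    group

def invConjEquiv (m : ℤ) : FreeGroup (Fin 2) ≃* FreeGroup (Fin 2) :=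
  (invConjHom m).toMulEquiv (invConjHom m) (invConjHom_comp_self m) (invConjHom_comp_self m)

theorem word_x1m_x2e_x1n_x2me_inverted (m n ε : ℤ) :
    ∃ σ : FreeGroup (Fin 2) ≃* FreeGroup (Fin 2),
      σ (FreeGroup.of 0) = (FreeGroup.of 0)⁻¹ ∧
      σ (FreeGroup.of 1) =
        FreeGroup.of 0 ^ m * FreeGroup.of 1 * FreeGroup.of 0 ^ (-m) ∧
      σ (FreeGroup.of 0 ^ m * FreeGroup.of 1 ^ ε *
            FreeGroup.of 0 ^ n * FreeGroup.of 1 ^ (-ε)) =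
        (FreeGroup.of 0 ^ m * FreeGroup.of 1 ^ ε *
            FreeGroup.of 0 ^ n * FreeGroup.of 1 ^ (-ε))⁻¹ ∧
      ∃ ψ : FreeGroup (Fin 2) →* FreeGroup (Fin 2),
        ψ (FreeGroup.of 0 ^ m * FreeGroup.of 1 ^ ε *
              FreeGroup.of 0 ^ n * FreeGroup.of 1 ^ (-ε)) =
          (FreeGroup.of 0 ^ m * FreeGroup.of 1 ^ ε *
              FreeGroup.of 0 ^ n * FreeGroup.of 1 ^ (-ε))⁻¹ := by
  have hword := map_zpow_mul_zpow_mul_zpow_mul_zpow_neg_eq_inv (invConjHom m) m n ε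
    (invConjHom_of_zero m) (invConjHom_of_one m)
  exact ⟨invConjEquiv m, invConjHom_of_zero m, invConjHom_of_one m, hword, invConjHom m, hword⟩
end

section
/- (Rhemtulla) A word w ∈ F_n satisfies G_w = G for every group G if and only if w ∈ x₁^{e₁}⋯x_n^{e_n} F_n' for integers e₁,…,e_n with gcd(e₁,…,e_n) = 1, where F_n' is the commutator subgroup of F_n. -/
namespace FreeGroup

variable {ι : Type*}

theorem map_lift {G H : Type*} [Group G] [Group H] (φ : G →* H) (f : ι → G)
    (w : FreeGroup ι) : φ (lift f w) = lift (φ ∘ f) w :=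
  DFunLike.congr_fun (ext_hom (φ.comp (lift f)) (lift (φ ∘ f)) fun i => by simp) w

theorem lift_eq_of_inv_mul_mem_commutator {A : Type*} [CommGroup A] (f : ι → A)
    {u w : FreeGroup ι} (h : u⁻¹ * w ∈ commutator (FreeGroup ι)) : lift f w = lift f u := by
  have := Abelianization.commutator_subset_ker (lift f) h
  rwa [MonoidHom.mem_ker, _root_.map_mul, _root_.map_inv, inv_mul_eq_one, eq_comm] at this

variable [DecidableEq ι]

def exponentSums : FreeGroup ι →* Multiplicative (ι → ℤ) :=
  lift fun i => .ofAdd (Pi.single i 1)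

theorem lift_eq_prod_zpow_exponentSums [Fintype ι] {A : Type*} [CommGroup A] (f : ι → A)
    (w : FreeGroup ι) : lift f w = ∏ i, f i ^ (exponentSums w).toAdd i := by
  induction w with
  | C1 => simp
  | of j => simp [exponentSums, Pi.single_apply]
  | inv_of j h => simp [h]
  | mul x y hx hy => simp [hx, hy, zpow_add, Finset.prod_mul_distrib]

def prodZPowOf {n : ℕ} (e : Fin n → ℤ) : FreeGroup (Fin n) :=
  ((List.finRange n).map fun i => of i ^ e i).prod

theorem lift_prodZPowOf {n : ℕ} {A : Type*} [CommGroup A] (f : Fin n → A) (e : Fin n → ℤ) :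
    lift f (prodZPowOf e) = ∏ i, f i ^ e i := by
  simp [prodZPowOf, map_list_prod, Fin.prod_univ_def, Function.comp_def]

theorem exponentSums_prodZPowOf {n : ℕ} (e : Fin n → ℤ) :
    exponentSums (prodZPowOf e) = .ofAdd e := by
  rw [exponentSums, lift_prodZPowOf]
  simp only [← ofAdd_zsmul, ← ofAdd_sum, ← Pi.single_smul', smul_eq_mul, mul_one,
    Finset.univ_sum_single]

theorem inv_prodZPowOf_exponentSums_mul_mem_commutator {n : ℕ} (w : FreeGroup (Fin n)) :
    (prodZPowOf (exponentSums w).toAdd)⁻¹ * w ∈ commutator (FreeGroup (Fin n)) := by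
  have hof : lift (fun i : Fin n => Abelianization.of (of i)) = Abelianization.of :=
    ext_hom _ _ fun i => by simp
  rw [← Abelianization.ker_of, MonoidHom.mem_ker, _root_.map_mul, _root_.map_inv, inv_mul_eq_one,
    ← hof, lift_prodZPowOf, lift_eq_prod_zpow_exponentSums]

theorem inv_prodZPowOf_mul_mem_commutator_iff {n : ℕ} (e : Fin n → ℤ)
    (w : FreeGroup (Fin n)) :
    (prodZPowOf e)⁻¹ * w ∈ commutator (FreeGroup (Fin n)) ↔ (exponentSums w).toAdd = e := by
  constructor
  · intro h
    rw [exponentSums, lift_eq_of_inv_mul_mem_commutator _ h, ← exponentSums,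
      exponentSums_prodZPowOf]
    rfl
  · rintro rfl
    exact inv_prodZPowOf_exponentSums_mul_mem_commutator w

theorem toAdd_lift_ofAdd [Fintype ι] (c : ι → ℤ) (w : FreeGroup ι) :
    (lift (fun i => Multiplicative.ofAdd (c i)) w).toAdd =
      ∑ i, (exponentSums w).toAdd i * c i := by
  simp [lift_eq_prod_zpow_exponentSums, toAdd_prod, mul_comm]

end FreeGroup

open FreeGroup

theorem map_mem_wordImage {n : ℕ} {w : FreeGroup (Fin n)} {G H : Type*} [Group G] [Group H]
    (φ : G →* H) {g : G} (hg : g ∈ wordImage w G) : φ g ∈ wordImage w H := by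
  obtain ⟨f, rfl⟩ := hg
  exact ⟨φ ∘ f, (map_lift φ f w).symm⟩

theorem gcd_exponentSums_eq_one_of_mem_wordImage {n : ℕ} {w : FreeGroup (Fin n)}
    (h : Multiplicative.ofAdd 1 ∈ wordImage w (Multiplicative ℤ)) :
    Finset.univ.gcd (exponentSums w).toAdd = 1 := by
  obtain ⟨f, hf⟩ := h
  have hsum : ∑ i, (exponentSums w).toAdd i * (f i).toAdd = 1 := by
    rw [← toAdd_lift_ofAdd]
    exact congrArg Multiplicative.toAdd hf
  have hdvd : Finset.univ.gcd (exponentSums w).toAdd ∣ 1 :=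
    hsum ▸ Finset.dvd_sum fun i _ => (Finset.gcd_dvd (Finset.mem_univ i)).mul_right _
  rw [← Finset.normalize_gcd, normalize_eq_one]
  exact isUnit_of_dvd_one hdvd

theorem wordImage_eq_univ_of_gcd_exponentSums_eq_one {n : ℕ} {w : FreeGroup (Fin n)}
    (h : Finset.univ.gcd (exponentSums w).toAdd = 1) (G : Type*) [Group G] :
    wordImage w G = Set.univ := by
  obtain ⟨c, hc⟩ := Finset.gcd_eq_sum_mul Finset.univ (exponentSums w).toAdd
  refine Set.eq_univ_of_forall fun g => ⟨fun i => g ^ c i, ?_⟩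
  calc lift (fun i => g ^ c i) w
      = zpowersHom G g (lift (fun i => Multiplicative.ofAdd (c i)) w) := by
        simp [map_lift, Function.comp_def]
    _ = g ^ ∑ i, (exponentSums w).toAdd i * c i := by
      rw [zpowersHom_apply, toAdd_lift_ofAdd]
    _ = g := by rw [← hc, h, zpow_one]

/-- Rhemtulla's characterization of words that are surjective on every group. -/
theorem surjective_on_all_groups_iff {n : ℕ} (w : FreeGroup (Fin n)) :
    (∀ (G : Type u) [Group G], wordImage w G = Set.univ) ↔
      ∃ e : Fin n → ℤ, Finset.gcd Finset.univ e = 1 ∧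
        (((List.finRange n).map fun i => FreeGroup.of i ^ e i).prod)⁻¹ * w ∈
          commutator (FreeGroup (Fin n)) := by
  change _ ↔ ∃ e, _ ∧ (prodZPowOf e)⁻¹ * w ∈ _
  simp only [inv_prodZPowOf_mul_mem_commutator_iff, exists_eq_right']
  refine ⟨fun h => gcd_exponentSums_eq_one_of_mem_wordImage ?_,
    fun h G _ => wordImage_eq_univ_of_gcd_exponentSums_eq_one h G⟩
  have hsurj := h (ULift (Multiplicative ℤ))
  exact map_mem_wordImage MulEquiv.ulift.toMonoidHom
    (hsurj ▸ Set.mem_univ (ULift.up (Multiplicative.ofAdd 1)))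
end

section
/- For every n, T_n ∩ A_n = D_n, where T_n is the set of test words, A_n the set of achiral words, and D_n = {w ∈ A_n : every endomorphism of F_n sending w to w⁻¹ is an automorphism}. -/
/-- `w` is a test word: every endomorphism fixing `w` is an automorphism. -/
def IsTestWord {n : ℕ} (w : FreeGroup (Fin n)) : Prop :=
  ∀ φ : FreeGroup (Fin n) →* FreeGroup (Fin n), φ w = w → Function.Bijective φ

/-- `D_n`: achiral words all of whose inverting endomorphisms are automorphisms. -/
def InD {n : ℕ} (w : FreeGroup (Fin n)) : Prop :=
  Achiral w ∧ ∀ φ : FreeGroup (Fin n) →* FreeGroup (Fin n),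
    φ w = w⁻¹ → Function.Bijective φ

theorem test_inter_achiral_eq_D (n : ℕ) :
    {w : FreeGroup (Fin n) | IsTestWord w} ∩ {w | Achiral w} = {w | InD w} := by
  ext w
  simp only [Set.mem_inter_iff, Set.mem_setOf_eq]
  constructor
  · rintro ⟨htest, ψ, hψ⟩
    refine ⟨⟨ψ, hψ⟩, fun φ hφ => ?_⟩
    have h1 : (ψ.comp φ) w = w := by simp [MonoidHom.comp_apply, hφ, hψ]
    have h2 : (φ.comp ψ) w = w := by simp [MonoidHom.comp_apply, hφ, hψ]
    have b1 := htest _ h1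
    have b2 := htest _ h2
    exact ⟨Function.Injective.of_comp (f := ψ) b1.1,
      Function.Surjective.of_comp (g := ψ) b2.2⟩
  · rintro ⟨⟨ψ, hψ⟩, hD⟩
    refine ⟨fun φ hφ => ?_, ψ, hψ⟩
    have h1 : (ψ.comp φ) w = w⁻¹ := by simp [MonoidHom.comp_apply, hφ, hψ]
    have h2 : (φ.comp ψ) w = w⁻¹ := by simp [MonoidHom.comp_apply, hφ, hψ]
    have b1 := hD _ h1
    have b2 := hD _ h2
    exact ⟨Function.Injective.of_comp (f := ψ) b1.1,
      Function.Surjective.of_comp (g := ψ) b2.2⟩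
end

section
/- If w ∈ F_n is a test word admitting an endomorphism inverting it but no automorphism inverting it, then w is chiral (there exists a group G with G_w ≠ G_{w⁻¹}). More precisely, the set T_n \ D_n consists entirely of chiral words. -/
theorem test_not_D_chiral {n : ℕ} (w : FreeGroup (Fin n))
    (htest : IsTestWord w) (hnotD : ¬ InD w) :
    ∃ (G : Type) (_ : Group G), wordImage w G ≠ wordImage w⁻¹ G := by
  -- Step 1: test word + achiral implies InD, so w is not achiral.
  have hnotA : ¬ Achiral w := by
    intro hA
    obtain ⟨ψ, hψ⟩ := hA
    apply hnotD
    refine ⟨⟨ψ, hψ⟩, fun φ hφ => ?_⟩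
    have h1 : (ψ.comp φ) w = w := by
      simp [MonoidHom.comp_apply, hφ, hψ]
    have h2 : (φ.comp ψ) w = w := by
      simp [MonoidHom.comp_apply, hφ, hψ]
    have b1 := htest _ h1
    have b2 := htest _ h2
    exact ⟨Function.Injective.of_comp (f := ψ) b1.injective,
      Function.Surjective.of_comp (g := ψ) b2.surjective⟩
  -- Step 2: over G = FreeGroup (Fin n), the images differ.
  refine ⟨FreeGroup (Fin n), inferInstance, fun heq => hnotA ?_⟩
  have hw : w ∈ wordImage w (FreeGroup (Fin n)) := by
    refine ⟨FreeGroup.of, ?_⟩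
    have : FreeGroup.lift (FreeGroup.of (α := Fin n)) = MonoidHom.id _ := by
      ext x
      simp
    simp [this]
  rw [heq] at hw
  obtain ⟨f, hf⟩ := hw
  refine ⟨FreeGroup.lift f, ?_⟩
  have h : (FreeGroup.lift f w)⁻¹ = w := by
    rw [← map_inv]; exact hf
  simpa using congrArg Inv.inv h
end
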